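/- arXiv:1802.07991 — 4 statements merged into one kernel-verified Lean document; each statement's English description precedes it below -/
import Mathlib

section
/- A finite multigraph G has an odd factor (a spanning subgraph in which every vertex has odd degree) if and only if every connected component of G has an even number of vertices. -/
/-!
Work over `ZMod 2`: the degree parities of an edge set `F` are the incidence matrix applied to the
indicator of `F`. Every edge lies inside a component, so summing `F`-degrees over a component
counts each edge of `F` zero or two times; if all degrees are odd the component has even order.
Conversely a walk from `u` to `v` has parity vector `δᵤ + δᵥ`. Summing these over all `v`, each
joined to a fixed representative `r_C` of its component `C`, gives the all-ones vector plus
`|C| • δ_{r_C}` for each component, and these extra terms vanish when every component has even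
order.
-/

open Finset
open scoped Classical

/-- A multigraph on vertex type `V` with edge index type `E`: each edge `e` has two
distinct endpoints given as an unordered pair `ends e` (no loops, multiple edges allowed). -/
structure Multigraph (V : Type) (E : Type) where
  ends : E → Sym2 V
  no_loops : ∀ e, ¬ (ends e).IsDiag

namespace Multigraph

variable {V E : Type} [Fintype V] [Fintype E]

/-- The number of edges from the edge set `F` incident with `v`. -/
noncomputable def degIn (G : Multigraph V E) (F : Finset E) (v : V) : ℕ :=
  (F.filter (fun e => v ∈ G.ends e)).card

/-- The degree of `v` in `G`. -/
noncomputable def deg (G : Multigraph V E) (v : V) : ℕ := G.degIn Finset.univ v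

/-- The underlying simple graph of `G`. -/
def simple (G : Multigraph V E) : SimpleGraph V where
  Adj x y := x ≠ y ∧ ∃ e : E, G.ends e = s(x, y)
  symm := ⟨by
    rintro x y ⟨hxy, e, he⟩
    exact ⟨hxy.symm, e, by rw [he, Sym2.eq_swap]⟩⟩
  loopless := ⟨fun x h => h.1 rfl⟩

/-- `C` is the vertex set of a connected component of the subgraph of `G` induced by `S`. -/
def IsComponentOf (G : Multigraph V E) (S : Set V) (C : Finset V) : Prop :=
  ∃ v ∈ S, ∀ x : V, x ∈ C ↔
    Relation.ReflTransGen (fun a b => a ∈ S ∧ b ∈ S ∧ (G.simple).Adj a b) v x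

/-- The number of edges of `G` with one endpoint in `U₁` and the other in `U₂`. -/
noncomputable def eBetween (G : Multigraph V E) (U₁ U₂ : Finset V) : ℕ :=
  (Finset.univ.filter (fun e : E => ∃ x ∈ U₁, ∃ y ∈ U₂, G.ends e = s(x, y))).card

/-- The set of vertices of `G` of odd degree. -/
noncomputable def oddVerts (G : Multigraph V E) : Finset V :=
  Finset.univ.filter (fun v => Odd (G.deg v))

/-- The set of vertices of `G` of even degree. -/
noncomputable def evenVerts (G : Multigraph V E) : Finset V :=
  Finset.univ.filter (fun v => Even (G.deg v))

/-- `F` forms an odd subgraph: every vertex incident with an edge of `F` has odd `F`-degree. -/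
def IsOddSet (G : Multigraph V E) (F : Finset E) : Prop :=
  ∀ v : V, (∃ e ∈ F, v ∈ G.ends e) → Odd (G.degIn F v)

/-- `F` forms an even subgraph: every vertex has even `F`-degree. -/
def IsEvenSet (G : Multigraph V E) (F : Finset E) : Prop :=
  ∀ v : V, Even (G.degIn F v)

end Multigraph

open Multigraph

open Matrix

namespace Multigraph

variable {V E : Type} (G : Multigraph V E)

theorem ne_of_ends_eq {e : E} {a b : V} (h : G.ends e = s(a, b)) : a ≠ b := by
  rintro rfl
  exact G.no_loops e (h ▸ Sym2.mk_isDiag_iff.2 rfl)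

theorem exists_ends_eq_adj (e : E) : ∃ a b, G.ends e = s(a, b) ∧ G.simple.Adj a b := by
  induction h : G.ends e using Sym2.ind with
  | _ a b => exact ⟨a, b, rfl, G.ne_of_ends_eq h, e, h⟩

theorem even_card_filter_mem_ends {C : Finset V}
    (hC : ∀ a b, G.simple.Adj a b → (a ∈ C ↔ b ∈ C)) (e : E) :
    Even #{v ∈ C | v ∈ G.ends e} := by
  obtain ⟨a, b, hab, hadj⟩ := G.exists_ends_eq_adj e
  have hfilter : {v ∈ C | v ∈ G.ends e} = if a ∈ C then {a, b} else ∅ := by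
    have hb := hC a b hadj
    ext v
    split_ifs with ha <;> simp only [Finset.mem_filter, hab, Sym2.mem_iff] <;> aesop
  rw [hfilter]
  split_ifs
  · simp [Finset.card_pair hadj.ne]
  · simp

theorem even_sum_degIn {C : Finset V}
    (hC : ∀ a b, G.simple.Adj a b → (a ∈ C ↔ b ∈ C)) (F : Finset E) :
    Even (∑ v ∈ C, G.degIn F v) := by
  have hswap : ∑ v ∈ C, G.degIn F v = ∑ e ∈ F, #{v ∈ C | v ∈ G.ends e} := by
    simp only [degIn, Finset.card_filter]
    exact Finset.sum_comm
  rw [hswap]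
  exact Finset.even_sum _ fun e _ => G.even_card_filter_mem_ends hC e

theorem even_card_of_odd_degIn {C : Finset V}
    (hC : ∀ a b, G.simple.Adj a b → (a ∈ C ↔ b ∈ C)) {F : Finset E}
    (hF : ∀ v, Odd (G.degIn F v)) : Even #C := by
  simpa [hF] using (Finset.even_sum_iff_even_card_odd _).1 (G.even_sum_degIn hC F)

noncomputable def incMatrix : Matrix V E (ZMod 2) :=
  Matrix.of fun v e => if v ∈ G.ends e then 1 else 0

theorem incMatrix_mulVec_single [Fintype E] {e : E} {a b : V} (h : G.ends e = s(a, b)) :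
    G.incMatrix *ᵥ Pi.single e 1 = Pi.single a 1 + Pi.single b 1 := by
  ext v
  have hab := G.ne_of_ends_eq h
  by_cases hva : v = a <;> by_cases hvb : v = b <;>
    simp_all [incMatrix]

theorem degIn_eq_mulVec [Fintype E] (f : E → ZMod 2) (v : V) :
    (G.degIn {e | f e = 1} v : ZMod 2) = (G.incMatrix *ᵥ f) v := by
  simp only [degIn, Finset.filter_filter, Finset.natCast_card_filter, incMatrix, mulVec,
    dotProduct, of_apply, ite_mul, one_mul, zero_mul]
  have hbool : ∀ x : ZMod 2, (if x = 1 then 1 else 0) = x := by decide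
  refine Finset.sum_congr rfl fun e _ => ?_
  by_cases hv : v ∈ G.ends e <;> simp [hv, hbool]

theorem single_add_single_mem_range_incMatrix [Fintype E] {u v : V}
    (h : G.simple.Reachable u v) :
    Pi.single u 1 + Pi.single v 1 ∈ LinearMap.range G.incMatrix.mulVecLin := by
  -- for the instance `CharP (V → ZMod 2) 2`
  have : Nonempty V := ⟨u⟩
  obtain ⟨p⟩ := h
  induction p with
  | nil => simpa only [CharTwo.add_self_eq_zero] using zero_mem _
  | cons hadj p ih =>
    obtain ⟨-, e, he⟩ := hadj
    have hedge : Pi.single _ 1 + Pi.single _ 1 ∈ LinearMap.range G.incMatrix.mulVecLin :=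
      ⟨Pi.single e 1, G.incMatrix_mulVec_single he⟩
    simpa only [add_assoc, CharTwo.add_cancel_left] using add_mem hedge ih

theorem one_mem_range_incMatrix [Fintype V] [Fintype E]
    (h : ∀ c : G.simple.ConnectedComponent,
      Even (Nat.card {v : V // G.simple.connectedComponentMk v = c})) :
    1 ∈ LinearMap.range G.incMatrix.mulVecLin := by
  let rep : G.simple.ConnectedComponent → V := Quot.out
  have hreach (v : V) : G.simple.Reachable v (rep (G.simple.connectedComponentMk v)) :=
    SimpleGraph.ConnectedComponent.exact (Quot.out_eq _).symm
  have hvanish (c : G.simple.ConnectedComponent) :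
      #{v | G.simple.connectedComponentMk v = c} • (Pi.single (rep c) 1 : V → ZMod 2) = 0 := by
    have hc := h c
    rw [Nat.card_eq_fintype_card, Fintype.card_subtype, ← ZMod.natCast_eq_zero_iff_even] at hc
    rw [← Nat.cast_smul_eq_nsmul (ZMod 2), hc, zero_smul]
  have hsum := Submodule.sum_mem _ fun v (_ : v ∈ Finset.univ) =>
    G.single_add_single_mem_range_incMatrix (hreach v)
  rwa [Finset.sum_add_distrib, Finset.univ_sum_single (fun _ => 1),
    Finset.sum_comp (fun c => Pi.single (rep c) 1),
    Finset.sum_eq_zero fun c _ => hvanish c, add_zero] at hsum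

end Multigraph

theorem stmt0 {V E : Type} [Fintype V] [Fintype E] (G : Multigraph V E) :
    (∃ F : Finset E, ∀ v : V, Odd (G.degIn F v)) ↔
    ∀ c : G.simple.ConnectedComponent,
      Even (Nat.card {v : V // G.simple.connectedComponentMk v = c}) := by
  constructor
  · rintro ⟨F, hF⟩ c
    rw [Nat.card_eq_fintype_card, Fintype.card_subtype]
    refine G.even_card_of_odd_degIn (fun a b hab => ?_) hF
    simp [SimpleGraph.ConnectedComponent.sound hab.reachable]
  · intro h
    obtain ⟨f, hf⟩ := G.one_mem_range_incMatrix h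
    refine ⟨Finset.univ.filter (f · = 1), fun v => ?_⟩
    rw [← ZMod.natCast_eq_one_iff_odd, G.degIn_eq_mulVec, ← mulVecLin_apply, hf, Pi.one_apply]
end

section
/- Let G be a finite multigraph, let 𝒴 and 𝒵 denote the sets of components of the subgraph induced by the even-degree vertices of G having odd order and even order respectively. Suppose there exists a partition ℛ ∪ ℬ of the components of the subgraph induced by the odd-degree vertices of G such that, with R and B the unions of the vertex sets of components in ℛ and ℬ, e_G(R, Y) and e_G(B, Y) are both odd for every Y ∈ 𝒴, and e_G(R, Z) and e_G(B, Z) are both even for every Z ∈ 𝒵. Then G can be decomposed into two odd subgraphs. -/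
open Finset
open scoped Classical

/-!
Put into `F` every edge meeting `R`, together with an edge set `J` inside the subgraph induced
by the even-degree vertices whose degree at each even vertex `v` has the parity of
`1 + e(R, {v})`. Then every vertex of `R` has all its edges in `F`, an odd vertex outside `R`
has none (no edge joins `R` to the other odd components), and every even vertex has odd degree
in `F`, hence also in its complement. Such a `J` exists as soon as the prescribed parities sum
to zero over each even component `C`, i.e. when `|C| + e(R, C)` is even.
-/

namespace Multigraph

open scoped symmDiff

variable {V E : Type} (G : Multigraph V E)

theorem degIn_union_of_disjoint {F₁ F₂ : Finset E} (h : Disjoint F₁ F₂) (v : V) :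
    G.degIn (F₁ ∪ F₂) v = G.degIn F₁ v + G.degIn F₂ v := by
  rw [degIn, filter_union]
  exact card_union_of_disjoint (disjoint_filter_filter h)

theorem degIn_add_degIn_compl [Fintype E] (F : Finset E) (v : V) :
    G.degIn F v + G.degIn Fᶜ v = G.deg v := by
  rw [deg, ← degIn_union_of_disjoint G disjoint_compl_right, union_compl]

theorem natCast_degIn_symmDiff (F₁ F₂ : Finset E) (v : V) :
    (G.degIn (F₁ ∆ F₂) v : ZMod 2) = G.degIn F₁ v + G.degIn F₂ v := by
  have hunion :
      G.degIn (F₁ ∪ F₂) v + G.degIn (F₁ ∩ F₂) v = G.degIn F₁ v + G.degIn F₂ v := by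
    simp only [degIn, filter_union, filter_inter_distrib]
    exact card_union_add_card_inter _ _
  have hsplit :
      G.degIn (F₁ ∪ F₂) v = G.degIn (F₁ ∆ F₂) v + G.degIn (F₁ ∩ F₂) v := by
    convert G.degIn_union_of_disjoint (disjoint_symmDiff_inf F₁ F₂) v using 2
    · exact (symmDiff_sup_inf F₁ F₂).symm
    · rfl
  have := congrArg (Nat.cast : ℕ → ZMod 2) (hsplit ▸ hunion)
  push_cast at this
  rwa [add_assoc, CharTwo.add_self_eq_zero, add_zero] at this

theorem degIn_singleton (e : E) (v : V) :
    G.degIn {e} v = if v ∈ G.ends e then 1 else 0 := by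
  rw [degIn, filter_singleton]
  split_ifs <;> rfl

theorem isOddSet_of_forall_eq_zero_or_odd {F : Finset E}
    (h : ∀ v, G.degIn F v = 0 ∨ Odd (G.degIn F v)) : G.IsOddSet F := by
  rintro v ⟨e, he, hv⟩
  exact (h v).resolve_left (card_pos.2 ⟨e, mem_filter.2 ⟨he, hv⟩⟩).ne'

theorem isOddSet_and_isOddSet_compl [Fintype E] {F : Finset E}
    (hodd : ∀ v, Odd (G.deg v) → G.degIn F v = 0 ∨ G.degIn F v = G.deg v)
    (heven : ∀ v, Even (G.deg v) → Odd (G.degIn F v)) :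
    G.IsOddSet F ∧ G.IsOddSet Fᶜ := by
  refine ⟨G.isOddSet_of_forall_eq_zero_or_odd fun v => ?_,
    G.isOddSet_of_forall_eq_zero_or_odd fun v => ?_⟩
  · rcases Nat.even_or_odd (G.deg v) with hdeg | hdeg
    · exact .inr (heven v hdeg)
    · exact (hodd v hdeg).imp_right fun h => by rwa [h]
  · have hsum := G.degIn_add_degIn_compl F v
    rw [Nat.eq_sub_of_add_eq' hsum]
    rcases Nat.even_or_odd (G.deg v) with hdeg | hdeg
    · exact .inr (Nat.Even.sub_odd (hsum ▸ Nat.le_add_right _ _) hdeg (heven v hdeg))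
    · rcases hodd v hdeg with h | h <;> rw [h]
      exacts [.inr hdeg, .inl (Nat.sub_self _)]

def inducedAdj (S : Set V) (a b : V) : Prop := a ∈ S ∧ b ∈ S ∧ G.simple.Adj a b

theorem mem_of_reflTransGen_inducedAdj {S : Set V} {a b : V} (ha : a ∈ S)
    (h : Relation.ReflTransGen (G.inducedAdj S) a b) : b ∈ S := by
  induction h with
  | refl => exact ha
  | tail _ hstep _ => exact hstep.2.1

theorem eq_of_reflTransGen_inducedAdj {S : Set V} {a b : V} (ha : a ∉ S)
    (h : Relation.ReflTransGen (G.inducedAdj S) a b) : b = a := by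
  rcases h.cases_head with rfl | ⟨c, hac, -⟩
  · rfl
  · exact absurd hac.1 ha

theorem isComponentOf_reflTransGen [Fintype V] {S : Set V} {v : V} (hv : v ∈ S) :
    G.IsComponentOf S (univ.filter (Relation.ReflTransGen (G.inducedAdj S) v)) :=
  ⟨v, hv, fun x => by simp only [mem_filter, mem_univ, true_and]; rfl⟩

def componentSetoid (S : Set V) : Setoid V where
  r := Relation.ReflTransGen (G.inducedAdj S)
  iseqv := by
    have : Std.Symm (G.inducedAdj S) := ⟨fun _ _ ⟨ha, hb, hab⟩ => ⟨hb, ha, hab.symm⟩⟩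
    exact ⟨fun _ => .refl, fun h => Relation.ReflTransGen.stdSymm.symm _ _ h, .trans⟩

def degParities [Fintype E] (S : Set V) : AddSubmonoid (V → ZMod 2) where
  carrier := {t | ∃ F : Finset E, (∀ e ∈ F, ∀ x ∈ G.ends e, x ∈ S) ∧
    ∀ x, (G.degIn F x : ZMod 2) = t x}
  zero_mem' := ⟨∅, by simp, fun x => by simp [degIn]⟩
  add_mem' := by
    rintro t₁ t₂ ⟨F₁, hF₁S, hF₁⟩ ⟨F₂, hF₂S, hF₂⟩
    refine ⟨F₁ ∆ F₂, fun e he => ?_,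
      fun x => by rw [natCast_degIn_symmDiff, hF₁, hF₂, Pi.add_apply]⟩
    rcases mem_symmDiff.1 he with ⟨he, -⟩ | ⟨he, -⟩
    exacts [hF₁S e he, hF₂S e he]

theorem single_add_single_mem_degParities [Fintype E] [DecidableEq V] {S : Set V} {a b : V}
    (h : Relation.ReflTransGen (G.inducedAdj S) a b) :
    Pi.single a 1 + Pi.single b 1 ∈ G.degParities S := by
  induction h with
  | refl =>
    rw [← Pi.single_add, show (1 + 1 : ZMod 2) = 0 from rfl, Pi.single_zero]
    exact zero_mem _
  | @tail b c _ hbc ih =>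
    obtain ⟨hb, hc, hne, e, he⟩ := hbc
    have hedge : Pi.single b 1 + Pi.single c 1 ∈ G.degParities S := by
      refine ⟨{e}, fun e' he' x hx => ?_, fun x => ?_⟩
      · rw [mem_singleton.1 he', he, Sym2.mem_iff] at hx
        rcases hx with rfl | rfl
        exacts [hb, hc]
      · simp only [degIn_singleton, he, Sym2.mem_iff]
        by_cases hxb : x = b <;> by_cases hxc : x = c <;> simp_all
    convert add_mem ih hedge using 1
    ext x
    simp only [Pi.add_apply]
    rw [add_assoc, ← add_assoc (Pi.single b 1 x), CharTwo.add_self_eq_zero, zero_add]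

theorem mem_degParities_of_sum_eq_zero [Fintype V] [Fintype E] {S : Set V} (t : V → ZMod 2)
    (ht : ∀ x ∉ S, t x = 0)
    (hsum : ∀ v ∈ S,
      ∑ x ∈ univ.filter (Relation.ReflTransGen (G.inducedAdj S) v), t x = 0) :
    t ∈ G.degParities S := by
  let s := G.componentSetoid S
  let r : V → V := fun x => (Quotient.mk s x).out
  have hr : ∀ x, s (r x) x := fun x => Quotient.mk_out x
  have hfiber : ∀ y, ∑ x ∈ univ.filter (fun x => r x = y), t x = 0 := by
    intro y
    by_cases hy : ∃ x₀, r x₀ = y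
    · obtain ⟨x₀, rfl⟩ := hy
      have hclass : univ.filter (fun x => r x = r x₀) = univ.filter (s (r x₀)) := by
        ext x
        simp only [mem_filter, mem_univ, true_and]
        refine ⟨fun h => h ▸ hr x, fun h => ?_⟩
        exact congrArg Quotient.out (Quotient.sound (s.trans (s.symm h) (hr x₀)))
      rw [hclass]
      by_cases hS : r x₀ ∈ S
      · exact hsum _ hS
      · have : univ.filter (s (r x₀)) = {r x₀} := by
          ext x
          simp only [mem_filter, mem_univ, true_and, mem_singleton]
          exact ⟨G.eq_of_reflTransGen_inducedAdj hS, fun h => h ▸ s.refl _⟩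
        rw [this, sum_singleton, ht _ hS]
    · push Not at hy
      rw [filter_false_of_mem fun x _ => hy x, sum_empty]
  -- the correction term `∑ x, t x • Pi.single (r x) 1` vanishes since `t` sums to zero over
  -- every component
  have hdecomp : t = ∑ x, t x • (Pi.single x 1 + Pi.single (r x) 1) := by
    ext y
    simp only [Finset.sum_apply, Pi.smul_apply, Pi.add_apply, Pi.single_apply, smul_eq_mul, mul_add,
      sum_add_distrib, mul_ite, mul_one, mul_zero, sum_ite_eq, mem_univ, if_true]
    rw [← sum_filter, filter_congr fun x _ => eq_comm, hfiber, add_zero]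
  rw [hdecomp]
  refine sum_mem fun x _ => ?_
  have hmem := G.single_add_single_mem_degParities (s.symm (hr x))
  rcases (by decide : ∀ a : ZMod 2, a = 0 ∨ a = 1) (t x) with h | h
  · rw [h, zero_smul]
    exact zero_mem _
  · rwa [h, one_smul]

section EdgesMeeting

variable [Fintype E]

noncomputable def edgesMeeting (R : Finset V) : Finset E :=
  univ.filter fun e => ∃ x ∈ R, x ∈ G.ends e

theorem degIn_edgesMeeting_of_mem {R : Finset V} {v : V} (hv : v ∈ R) :
    G.degIn (G.edgesMeeting R) v = G.deg v := by
  rw [deg, degIn, degIn, edgesMeeting, filter_filter]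
  congr 1
  exact filter_congr fun e _ => ⟨And.right, fun h => ⟨⟨v, hv, h⟩, h⟩⟩

theorem degIn_edgesMeeting_of_notMem {R : Finset V} {v : V} (hv : v ∉ R) :
    G.degIn (G.edgesMeeting R) v = G.eBetween R {v} := by
  rw [degIn, eBetween, edgesMeeting, filter_filter]
  congr 1
  refine filter_congr fun e _ => ⟨fun ⟨⟨x, hx, hxe⟩, hve⟩ => ?_, ?_⟩
  · obtain ⟨z, hz⟩ := Sym2.mem_iff_exists.1 hve
    rw [hz, Sym2.mem_iff] at hxe
    rcases hxe with rfl | rfl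
    · exact absurd hx hv
    · exact ⟨x, hx, v, mem_singleton_self v, hz.trans Sym2.eq_swap⟩
  · rintro ⟨x, hx, y, hy, he⟩
    rw [mem_singleton.1 hy] at he
    exact ⟨⟨x, hx, he ▸ Sym2.mem_mk_left x v⟩, he ▸ Sym2.mem_mk_right x v⟩

theorem eBetween_eq_sum_singleton {R C : Finset V} (h : Disjoint R C) :
    G.eBetween R C = ∑ y ∈ C, G.eBetween R {y} := by
  have hunion : univ.filter (fun e => ∃ x ∈ R, ∃ y ∈ C, G.ends e = s(x, y)) =
      C.biUnion fun y =>
        univ.filter fun e => ∃ x ∈ R, ∃ y' ∈ ({y} : Finset V), G.ends e = s(x, y') := by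
    ext e
    simp only [mem_filter, mem_univ, true_and, mem_biUnion, mem_singleton, exists_eq_left]
    exact ⟨fun ⟨x, hx, y, hy, he⟩ => ⟨y, hy, x, hx, he⟩,
      fun ⟨y, hy, x, hx, he⟩ => ⟨x, hx, y, hy, he⟩⟩
  rw [eBetween, hunion, card_biUnion]
  · rfl
  intro y₁ hy₁ y₂ hy₂ hne
  refine disjoint_left.2 fun e he₁ he₂ => ?_
  simp only [mem_filter, mem_univ, true_and, mem_singleton, exists_eq_left] at he₁ he₂
  obtain ⟨x₁, hx₁, he₁⟩ := he₁
  obtain ⟨x₂, hx₂, he₂⟩ := he₂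
  rcases Sym2.eq_iff.1 (he₁.symm.trans he₂) with ⟨-, rfl⟩ | ⟨rfl, -⟩
  · exact hne rfl
  · exact disjoint_left.1 h hx₁ hy₂

end EdgesMeeting

theorem exists_isOddSet_and_isOddSet_compl [Fintype V] [Fintype E] (R : Finset V)
    (hR : ∀ v ∈ R, Odd (G.deg v))
    (hR_closed : ∀ x ∈ R, ∀ v, Odd (G.deg v) → G.simple.Adj x v → v ∈ R)
    (hpar : ∀ C, G.IsComponentOf {v | Even (G.deg v)} C → Even (C.card + G.eBetween R C)) :
    ∃ F : Finset E, G.IsOddSet F ∧ G.IsOddSet Fᶜ := by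
  set S : Set V := {v | Even (G.deg v)}
  have hRS : ∀ v ∈ R, v ∉ S := fun v hv hvS => Nat.not_even_iff_odd.2 (hR v hv) hvS
  let t : V → ZMod 2 := fun x => if x ∈ S then 1 + G.eBetween R {x} else 0
  obtain ⟨J, hJS, hJ⟩ : t ∈ G.degParities S := by
    refine G.mem_degParities_of_sum_eq_zero t (fun x hx => if_neg hx) fun v hv => ?_
    set C := univ.filter (Relation.ReflTransGen (G.inducedAdj S) v)
    have hCS : ∀ x ∈ C, x ∈ S := fun x hx =>
      G.mem_of_reflTransGen_inducedAdj hv (mem_filter.1 hx).2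
    have hRC : Disjoint R C := disjoint_left.2 fun x hxR hxC => hRS x hxR (hCS x hxC)
    calc ∑ x ∈ C, t x = ∑ x ∈ C, (1 + (G.eBetween R {x} : ZMod 2)) :=
          sum_congr rfl fun x hx => if_pos (hCS x hx)
      _ = ((C.card + G.eBetween R C : ℕ) : ZMod 2) := by
        rw [sum_add_distrib, G.eBetween_eq_sum_singleton hRC]
        push_cast
        simp
      _ = 0 := (ZMod.natCast_eq_zero_iff_even).2 (hpar C (G.isComponentOf_reflTransGen hv))
  have hJ_notMem : ∀ v, v ∉ S → G.degIn J v = 0 := fun v hv =>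
    card_eq_zero.2 (filter_eq_empty_iff.2 fun e he hve => hv (hJS e he v hve))
  have hdisj : Disjoint (G.edgesMeeting R) J := disjoint_left.2 fun e he heJ => by
    obtain ⟨x, hxR, hxe⟩ := (mem_filter.1 he).2
    exact hRS x hxR (hJS e heJ x hxe)
  refine ⟨G.edgesMeeting R ∪ J,
    G.isOddSet_and_isOddSet_compl (fun v hv => ?_) (fun v hv => ?_)⟩
  · rw [G.degIn_union_of_disjoint hdisj, hJ_notMem v (Nat.not_even_iff_odd.2 hv), add_zero]
    by_cases hvR : v ∈ R
    · exact Or.inr (G.degIn_edgesMeeting_of_mem hvR)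
    · refine Or.inl ((G.degIn_edgesMeeting_of_notMem hvR).trans (card_eq_zero.2 ?_))
      refine filter_eq_empty_iff.2 fun e _ ⟨x, hx, y, hy, he⟩ => ?_
      rw [mem_singleton.1 hy] at he
      exact hvR (hR_closed x hx v hv ⟨fun h => hvR (h ▸ hx), e, he⟩)
  · have hvR : v ∉ R := fun h => hRS v h hv
    rw [← ZMod.natCast_eq_one_iff_odd, G.degIn_union_of_disjoint hdisj, Nat.cast_add,
      G.degIn_edgesMeeting_of_notMem hvR, hJ v, show t v = _ from if_pos hv, add_left_comm, CharTwo.add_self_eq_zero, add_zero]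

end Multigraph

open Multigraph

theorem stmt10 {V E : Type} [Fintype V] [Fintype E] (G : Multigraph V E)
    (R B : Finset V) (hRB : R ∪ B = G.oddVerts) (hdisj : Disjoint R B)
    (hcomp : ∀ C : Finset V, G.IsComponentOf {v : V | Odd (G.deg v)} C → C ⊆ R ∨ C ⊆ B)
    (hpar : (∀ Y : Finset V, G.IsComponentOf {v : V | Even (G.deg v)} Y →
      (Odd Y.card → Odd (G.eBetween R Y) ∧ Odd (G.eBetween B Y)) ∧
      (Even Y.card → Even (G.eBetween R Y) ∧ Even (G.eBetween B Y)))) :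
    ∃ F : Finset E, G.IsOddSet F ∧ G.IsOddSet Fᶜ := by
  have hR : ∀ v ∈ R, Odd (G.deg v) := fun v hv => by
    have : v ∈ G.oddVerts := hRB ▸ mem_union_left B hv
    exact (mem_filter.1 this).2
  refine G.exists_isOddSet_and_isOddSet_compl R hR (fun x hx v hv hxv => ?_) fun C hC => ?_
  · set S : Set V := {v | Odd (G.deg v)}
    have hxC : x ∈ univ.filter (Relation.ReflTransGen (G.inducedAdj S) x) :=
      mem_filter.2 ⟨mem_univ x, .refl⟩
    have hvC : v ∈ univ.filter (Relation.ReflTransGen (G.inducedAdj S) x) :=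
      mem_filter.2 ⟨mem_univ v, .single ⟨hR x hx, hv, hxv⟩⟩
    rcases hcomp _ (G.isComponentOf_reflTransGen (hR x hx)) with hCR | hCB
    · exact hCR hvC
    · exact absurd (hCB hxC) (disjoint_left.1 hdisj hx)
  · rcases Nat.even_or_odd C.card with h | h
    · exact h.add ((hpar C hC).2 h).1
    · exact h.add_odd ((hpar C hC).1 h).1
end

section
/- Let G be a finite bipartite multigraph constructed as follows from a multigraph H: one color class is the set 𝒳 of components of ⟨OddV(H)⟩_H, the other is the set of components of ⟨EvenV(H)⟩_H, with an edge between X and W if and only if e_H(X, W) is odd. Then every vertex of G lying in the even-side color class (i.e., every component W of ⟨EvenV(H)⟩_H) has even degree in G, i.e., the number of components X of ⟨OddV(H)⟩_H with e_H(X, W) odd is even. -/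
open Finset
open scoped Classical

open Multigraph

/-!
Every vertex of `W` has even degree, so the number of edges with exactly one end in `W` is
even. Such an edge cannot end in another even-degree vertex (that vertex would lie in `W`),
so it joins `W` to exactly one component `X` of the odd-degree vertices. Hence
`∑_X e(X, W)` is the size of the cut of `W`, which is even, and so an even number of its
terms are odd.
-/

namespace Multigraph

variable {V E : Type} {G : Multigraph V E} {S : Set V} {C C' : Finset V}

theorem IsComponentOf.subset (h : G.IsComponentOf S C) : (C : Set V) ⊆ S := by
  obtain ⟨v, hv, hC⟩ := h
  intro x hx
  rcases ((hC x).1 hx).cases_tail with rfl | ⟨_, -, hlast⟩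
  exacts [hv, hlast.2.1]

theorem IsComponentOf.mem_of_adj (h : G.IsComponentOf S C) {a b : V} (ha : a ∈ C)
    (hb : b ∈ S) (hab : G.simple.Adj a b) : b ∈ C := by
  obtain ⟨v, hv, hC⟩ := id h
  exact (hC b).2 (((hC a).1 ha).tail ⟨h.subset ha, hb, hab⟩)

theorem IsComponentOf.eq_of_mem (h : G.IsComponentOf S C) (h' : G.IsComponentOf S C')
    {x : V} (hx : x ∈ C) (hx' : x ∈ C') : C = C' := by
  obtain ⟨v, -, hC⟩ := h
  obtain ⟨v', -, hC'⟩ := h'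
  have : Std.Symm (fun a b => a ∈ S ∧ b ∈ S ∧ G.simple.Adj a b) :=
    ⟨fun _ _ hab => ⟨hab.2.1, hab.1, hab.2.2.symm⟩⟩
  have hv'v := ((hC' x).1 hx').trans (Std.Symm.symm _ _ ((hC x).1 hx))
  ext y
  rw [hC y, hC' y]
  exact ⟨hv'v.trans, (Std.Symm.symm _ _ hv'v).trans⟩

theorem exists_isComponentOf_mem [Fintype V] {v : V} (hv : v ∈ S) :
    ∃ C, G.IsComponentOf S C ∧ v ∈ C :=
  ⟨univ.filter (Relation.ReflTransGen (fun a b => a ∈ S ∧ b ∈ S ∧ G.simple.Adj a b) v),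
    ⟨v, hv, by simp⟩, by simpa using .refl⟩

theorem card_filter_mem_mk {U : Finset V} {a b : V} (hab : a ≠ b) :
    #(U.filter (· ∈ s(a, b))) = (if a ∈ U then 1 else 0) + (if b ∈ U then 1 else 0) := by
  simp only [Sym2.mem_iff]
  rw [filter_or, card_union_of_disjoint, filter_eq' U a, filter_eq' U b]
  · split_ifs <;> rfl
  · simp only [disjoint_left, mem_filter]
    rintro x ⟨-, rfl⟩ ⟨-, rfl⟩
    exact hab rfl

variable [Fintype E]

noncomputable def cut (G : Multigraph V E) (U : Finset V) : Finset E :=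
  univ.filter fun e => ∃ x ∈ U, ∃ y ∉ U, G.ends e = s(x, y)

noncomputable def edgesBetween (G : Multigraph V E) (U₁ U₂ : Finset V) : Finset E :=
  univ.filter fun e => ∃ x ∈ U₁, ∃ y ∈ U₂, G.ends e = s(x, y)

theorem mem_cut_iff_odd_card (G : Multigraph V E) (U : Finset V) (e : E) :
    e ∈ G.cut U ↔ Odd #(U.filter (· ∈ G.ends e)) := by
  induction h : G.ends e using Sym2.ind with | h a b => ?_
  have hab : a ≠ b := fun hab => G.no_loops e (by simp [h, hab])
  rw [card_filter_mem_mk hab]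
  simp only [cut, mem_filter, mem_univ, true_and, h, Sym2.eq_iff]
  split_ifs <;> grind

theorem sum_deg_eq_sum_card_filter_mem (G : Multigraph V E) (U : Finset V) :
    ∑ v ∈ U, G.deg v = ∑ e, #(U.filter (· ∈ G.ends e)) := by
  simp only [deg, degIn, card_filter]
  exact sum_comm

theorem even_card_cut (G : Multigraph V E) {U : Finset V} (hU : ∀ v ∈ U, Even (G.deg v)) :
    Even #(G.cut U) := by
  have hsum : Even (∑ e, #(U.filter (· ∈ G.ends e))) := by
    rw [← sum_deg_eq_sum_card_filter_mem]
    exact even_sum _ hU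
  rw [even_sum_iff_even_card_odd] at hsum
  convert hsum using 3
  ext e
  simp [mem_cut_iff_odd_card]

theorem disjoint_edgesBetween_of_isComponentOf {W X X' : Finset V}
    (hW : G.IsComponentOf S W) (hX : G.IsComponentOf Sᶜ X) (hX' : G.IsComponentOf Sᶜ X')
    (hne : X ≠ X') : Disjoint (G.edgesBetween X W) (G.edgesBetween X' W) := by
  simp only [disjoint_left, edgesBetween, mem_filter, mem_univ, true_and]
  rintro e ⟨x, hx, y, hy, he⟩ ⟨x', hx', y', hy', he'⟩
  rcases Sym2.eq_iff.1 (he.symm.trans he') with ⟨rfl, -⟩ | ⟨rfl, -⟩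
  · exact hne (hX.eq_of_mem hX' hx hx')
  · exact hX.subset hx (hW.subset hy')

theorem biUnion_edgesBetween_eq_cut [Fintype V] {W : Finset V} (hW : G.IsComponentOf S W) :
    (univ.filter (G.IsComponentOf Sᶜ)).biUnion (G.edgesBetween · W) = G.cut W := by
  ext e
  simp only [cut, edgesBetween, mem_biUnion, mem_filter, mem_univ, true_and]
  constructor
  · rintro ⟨X, hX, x, hx, y, hy, he⟩
    have hxW : x ∉ W := fun hxW => hX.subset hx (hW.subset hxW)
    exact ⟨y, hy, x, hxW, he.trans Sym2.eq_swap⟩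
  · rintro ⟨w, hw, u, hu, he⟩
    have huS : u ∈ Sᶜ := fun huS =>
      hu (hW.mem_of_adj hw huS ⟨fun h => hu (h ▸ hw), e, he⟩)
    obtain ⟨X, hX, huX⟩ := exists_isComponentOf_mem (G := G) huS
    exact ⟨X, hX, u, huX, w, hw, he.trans Sym2.eq_swap⟩

theorem sum_eBetween_eq_card_cut [Fintype V] {W : Finset V} (hW : G.IsComponentOf S W) :
    ∑ X ∈ univ.filter (G.IsComponentOf Sᶜ), G.eBetween X W = #(G.cut W) := by
  rw [← biUnion_edgesBetween_eq_cut hW, card_biUnion]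
  · rfl
  · intro X hX X' hX' hne
    exact disjoint_edgesBetween_of_isComponentOf hW (mem_filter.1 hX).2 (mem_filter.1 hX').2 hne

end Multigraph

theorem stmt13 {V E : Type} [Fintype V] [Fintype E] (H : Multigraph V E)
    (W : Finset V) (hW : H.IsComponentOf {v : V | Even (H.deg v)} W) :
    Even (((Finset.univ : Finset (Finset V)).filter
      (fun X => H.IsComponentOf {v : V | Odd (H.deg v)} X ∧ Odd (H.eBetween X W))).card) := by
  have hodd : {v : V | Odd (H.deg v)} = {v : V | Even (H.deg v)}ᶜ := by
    ext v
    simp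
  have hcut : Even #(H.cut W) := H.even_card_cut fun v hv => hW.subset hv
  rw [← sum_eBetween_eq_card_cut hW, even_sum_iff_even_card_odd, filter_filter] at hcut
  rwa [hodd]
end

section
/- The wheel W_4 (a 4-cycle plus a central vertex joined to all four cycle vertices) cannot be decomposed into three odd subgraphs. -/
open Finset
open scoped Classical

open Multigraph

/-- The wheel `W₄`: a 4-cycle on `0,1,2,3` plus the central vertex `4` joined to all of them. -/
def W4 : SimpleGraph (Fin 5) :=
  SimpleGraph.fromEdgeSet
    {s(0, 1), s(1, 2), s(2, 3), s(3, 0), s(4, 0), s(4, 1), s(4, 2), s(4, 3)}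


/-! Colour the edges by `ZMod 3` according to their class. At a vertex of degree 3 every colour
occurs zero or an odd number of times, so the three colours are all equal or all distinct; in
`ZMod 3` both cases say exactly that they sum to `0`. Taking the alternating sum of these equations
around the rim, the rim edges cancel and the spoke colours satisfy `s₀ - s₁ + s₂ - s₃ = 0`. At the
hub, of degree 4, the only admissible colour pattern is three spokes of one colour and one of
another, and then the alternating sum is `±(a - b) ≠ 0`. -/

theorem ZMod.add_add_eq_zero_of_odd_count {x y z : ZMod 3}
    (h : ∀ i ∈ ({x, y, z} : Multiset (ZMod 3)), Odd (Multiset.count i {x, y, z})) :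
    x + y + z = 0 := by
  revert x y z h; decide

theorem ZMod.sub_add_sub_ne_zero_of_odd_count {a b c d : ZMod 3}
    (h : ∀ i ∈ ({a, b, c, d} : Multiset (ZMod 3)), Odd (Multiset.count i {a, b, c, d})) :
    a - b + c - d ≠ 0 := by
  revert a b c d h; decide

theorem Finset.count_map_val_eq_card_inter {α β : Type*} [DecidableEq α] [DecidableEq β]
    {S F T : Finset α} {c : α → β} {i : β} (hF : ∀ e ∈ S, e ∈ F ↔ c e = i) (hT : T ⊆ S) :
    (T.val.map c).count i = #(F ∩ T) := by
  rw [Multiset.count_map, Finset.inter_comm, ← Finset.filter_mem_eq_inter]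
  exact congrArg Multiset.card <| Multiset.filter_congr fun e he =>
    (eq_comm.trans (hF e (hT he)).symm)

section threeColouring

variable {α : Type*} [DecidableEq α] {E₁ E₂ E₃ : Finset α}

def threeColouring (E₁ E₂ : Finset α) (e : α) : ZMod 3 :=
  if e ∈ E₁ then 0 else if e ∈ E₂ then 1 else 2

theorem exists_mem_iff_threeColouring_eq (h₁₂ : Disjoint E₁ E₂) (h₁₃ : Disjoint E₁ E₃)
    (h₂₃ : Disjoint E₂ E₃) {e : α} (he : e ∈ E₁ ∪ E₂ ∪ E₃) :
    ∃ F ∈ [E₁, E₂, E₃], e ∈ F ∧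
      ∀ x ∈ E₁ ∪ E₂ ∪ E₃, x ∈ F ↔ threeColouring E₁ E₂ x = threeColouring E₁ E₂ e := by
  have h₁₂ := Finset.disjoint_left.1 h₁₂
  have h₁₃ := Finset.disjoint_left.1 h₁₃
  have h₂₃ := Finset.disjoint_left.1 h₂₃
  simp only [Finset.mem_union] at he
  rcases he with (he | he) | he <;> [use E₁; use E₂; use E₃] <;>
    refine ⟨by simp, he, fun x hx => ?_⟩ <;> simp only [Finset.mem_union] at hx <;>
    unfold threeColouring <;> split_ifs <;> simp_all <;> decide

theorem odd_count_map_threeColouring (h₁₂ : Disjoint E₁ E₂) (h₁₃ : Disjoint E₁ E₃)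
    (h₂₃ : Disjoint E₂ E₃) (p : α → Prop) [DecidablePred p]
    (hodd : ∀ F ∈ [E₁, E₂, E₃], (∃ e ∈ F, p e) → Odd #(F.filter p)) :
    ∀ i ∈ ((E₁ ∪ E₂ ∪ E₃).filter p).val.map (threeColouring E₁ E₂),
      Odd ((((E₁ ∪ E₂ ∪ E₃).filter p).val.map (threeColouring E₁ E₂)).count i) := by
  intro i hi
  obtain ⟨e, he, rfl⟩ := Multiset.mem_map.1 hi
  rw [Finset.mem_val, Finset.mem_filter] at he
  obtain ⟨F, hF, heF, hFi⟩ := exists_mem_iff_threeColouring_eq h₁₂ h₁₃ h₂₃ he.1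
  have hFsub : F ⊆ E₁ ∪ E₂ ∪ E₃ := by
    simp only [List.mem_cons, List.not_mem_nil, or_false] at hF
    rcases hF with rfl | rfl | rfl <;> intro x hx <;> simp [hx]
  rw [Finset.count_map_val_eq_card_inter hFi (Finset.filter_subset _ _), Finset.inter_filter,
    Finset.inter_eq_left.2 hFsub]
  exact hodd F hF ⟨e, heF, he.2⟩

end threeColouring

def W4Edges : Finset (Sym2 (Fin 5)) :=
  {s(0, 1), s(1, 2), s(2, 3), s(3, 0), s(4, 0), s(4, 1), s(4, 2), s(4, 3)}

theorem W4_edgeSet : W4.edgeSet = W4Edges := by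
  rw [W4, SimpleGraph.edgeSet_fromEdgeSet, W4Edges]
  ext e
  simp only [Set.mem_sdiff, Finset.coe_insert, Finset.coe_singleton, and_iff_left_iff_imp]
  rintro (rfl | rfl | rfl | rfl | rfl | rfl | rfl | rfl) <;> decide

theorem stmt16 :
    ¬ ∃ E1 E2 E3 : Finset (Sym2 (Fin 5)),
      (↑E1 ∪ ↑E2 ∪ ↑E3 : Set (Sym2 (Fin 5))) = W4.edgeSet ∧
      Disjoint E1 E2 ∧ Disjoint E1 E3 ∧ Disjoint E2 E3 ∧
      ∀ Ei ∈ [E1, E2, E3], ∀ v : Fin 5, (∃ e ∈ Ei, v ∈ e) →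
        Odd ((Ei.filter (fun e => v ∈ e)).card) := by
  rintro ⟨E1, E2, E3, hcover, h12, h13, h23, hodd⟩
  replace hcover : E1 ∪ E2 ∪ E3 = W4Edges := by
    rwa [W4_edgeSet, ← Finset.coe_union, ← Finset.coe_union, Finset.coe_inj] at hcover
  set c := threeColouring E1 E2
  have hstar : ∀ (v : Fin 5) (m : Multiset (Sym2 (Fin 5))),
      (W4Edges.filter (v ∈ ·)).val = m → ∀ i ∈ m.map c, Odd ((m.map c).count i) := by
    rintro v m rfl
    rw [← hcover]
    exact odd_count_map_threeColouring h12 h13 h23 _ fun F hF => hodd F hF v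
  have h0 := ZMod.add_add_eq_zero_of_odd_count (hstar 0 {s(0, 1), s(3, 0), s(4, 0)} (by decide))
  have h1 := ZMod.add_add_eq_zero_of_odd_count (hstar 1 {s(0, 1), s(1, 2), s(4, 1)} (by decide))
  have h2 := ZMod.add_add_eq_zero_of_odd_count (hstar 2 {s(1, 2), s(2, 3), s(4, 2)} (by decide))
  have h3 := ZMod.add_add_eq_zero_of_odd_count (hstar 3 {s(2, 3), s(3, 0), s(4, 3)} (by decide))
  refine ZMod.sub_add_sub_ne_zero_of_odd_count
    (hstar 4 {s(4, 0), s(4, 1), s(4, 2), s(4, 3)} (by decide)) ?_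
  linear_combination h0 - h1 + h2 - h3
end
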